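/- Let f : ℝ^n → ℝ be differentiable, let x* ∈ ℝ^n, let D > 0 and 0 ≤ δ ≤ 1, and let N ≥ 1 be a natural number. Let x_1, x_2, …, x_{N+1} ∈ ℝ^n and g̃_1, …, g̃_N ∈ ℝ^n satisfy, for each k = 1, …, N: x_{k+1} = x_k − h_k g̃_k with h_k = D/√(2k); ∇f(x_k) ≠ 0; ‖g̃_k‖ = 1; ‖g̃_k − ∇f(x_k)/‖∇f(x_k)‖‖ ≤ δ; and ‖x_k − x*‖ ≤ D. Then min_{1 ≤ k ≤ N} v_f(x_k, x*) ≤ 3D/√(2N) + δD. -/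

import Mathlib

open scoped RealInnerProductSpace

/-- The auxiliary value `v_f(x, y)`: the inner product of the normalized gradient of `f` at `x`
with `x - y`, and `0` when the gradient vanishes. -/
noncomputable def vf {n : ℕ} (f : EuclideanSpace ℝ (Fin n) → ℝ)
    (x y : EuclideanSpace ℝ (Fin n)) : ℝ :=
  open Classical in
  if gradient f x = 0 then 0
  else ⟪(‖gradient f x‖)⁻¹ • gradient f x, x - y⟫

/-- Sum of `1/√(2k)` is at most `√(2M)`. -/
lemma sum_inv_sqrt_le (M : ℕ) :
    ∑ k ∈ Finset.Icc 1 M, (Real.sqrt (2 * k))⁻¹ ≤ Real.sqrt (2 * M) := by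
  induction M with
  | zero => simp
  | succ M ih =>
    rw [Finset.sum_Icc_succ_top (Nat.one_le_iff_ne_zero.mpr (Nat.succ_ne_zero M))]
    have h1 : Real.sqrt (2 * M) + (Real.sqrt (2 * (M+1:ℕ)))⁻¹ ≤ Real.sqrt (2 * (M+1:ℕ)) := by
      have hM : (0:ℝ) ≤ 2 * M := by positivity
      have hM1 : (0:ℝ) < 2 * ((M:ℝ)+1) := by positivity
      have s1 := Real.sq_sqrt hM
      have s2 : Real.sqrt (2 * ((M:ℝ)+1)) ^ 2 = 2 * ((M:ℝ)+1) := Real.sq_sqrt hM1.le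
      have p1 : (0:ℝ) ≤ Real.sqrt (2 * M) := Real.sqrt_nonneg _
      have p2 : (0:ℝ) < Real.sqrt (2 * ((M:ℝ)+1)) := Real.sqrt_pos.mpr hM1
      have hcast : (2 : ℝ) * ((M:ℕ)+1:ℕ) = 2 * ((M:ℝ)+1) := by push_cast; ring
      rw [hcast]
      have hkey : Real.sqrt (2*M) * Real.sqrt (2*((M:ℝ)+1)) ≤ 2*M+1 := by
        nlinarith [sq_nonneg (Real.sqrt (2*(M:ℝ)) - Real.sqrt (2*((M:ℝ)+1)))]
      have hinv : (Real.sqrt (2*((M:ℝ)+1)))⁻¹ * Real.sqrt (2*((M:ℝ)+1)) = 1 :=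
        inv_mul_cancel₀ p2.ne'
      nlinarith [mul_pos p2 p2, inv_nonneg.mpr p2.le]
    calc ∑ k ∈ Finset.Icc 1 M, (Real.sqrt (2 * k))⁻¹ + (Real.sqrt (2 * (M+1:ℕ)))⁻¹
        ≤ Real.sqrt (2 * M) + (Real.sqrt (2 * (M+1:ℕ)))⁻¹ := by linarith
      _ ≤ _ := h1

theorem stmt_8 {n : ℕ} (f : EuclideanSpace ℝ (Fin n) → ℝ)
    (hdiff : Differentiable ℝ f)
    (xstar : EuclideanSpace ℝ (Fin n))
    (D δ : ℝ) (hD : 0 < D) (hδ0 : 0 ≤ δ) (hδ1 : δ ≤ 1)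
    (N : ℕ) (hN : 1 ≤ N)
    (h : ℕ → ℝ) (hh : ∀ k, h k = D / Real.sqrt (2 * k))
    (x : ℕ → EuclideanSpace ℝ (Fin n)) (gtilde : ℕ → EuclideanSpace ℝ (Fin n))
    (hupd : ∀ k ∈ Finset.Icc 1 N, x (k + 1) = x k - h k • gtilde k)
    (hgrad : ∀ k ∈ Finset.Icc 1 N, gradient f (x k) ≠ 0)
    (hgt1 : ∀ k ∈ Finset.Icc 1 N, ‖gtilde k‖ = 1)
    (hgtδ : ∀ k ∈ Finset.Icc 1 N,
      ‖gtilde k - (‖gradient f (x k)‖)⁻¹ • gradient f (x k)‖ ≤ δ)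
    (hxD : ∀ k ∈ Finset.Icc 1 N, ‖x k - xstar‖ ≤ D) :
    (Finset.Icc 1 N).inf' (Finset.nonempty_Icc.mpr hN) (fun k => vf f (x k) xstar)
      ≤ 3 * D / Real.sqrt (2 * N) + δ * D := by
  set a : ℕ → ℝ := fun k => ‖x k - xstar‖ ^ 2 with ha
  set t : ℕ → ℝ := fun k => ⟪gtilde k, x k - xstar⟫ with ht
  set c : ℕ → ℝ := fun k => Real.sqrt (2 * k) / (2 * D) with hc
  have hsq : ∀ k : ℕ, 1 ≤ k → (0:ℝ) < Real.sqrt (2 * k) := by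
    intro k hk
    apply Real.sqrt_pos.mpr
    have : (1:ℝ) ≤ k := by exact_mod_cast hk
    linarith
  have hhpos : ∀ k : ℕ, 1 ≤ k → 0 < h k := by
    intro k hk; rw [hh]; exact div_pos hD (hsq k hk)
  have hcnn : ∀ k : ℕ, 0 ≤ c k := by
    intro k; apply div_nonneg (Real.sqrt_nonneg _); linarith
  have hcmono : ∀ j k : ℕ, j ≤ k → c j ≤ c k := by
    intro j k hjk
    have hjk' : (j:ℝ) ≤ k := Nat.cast_le.mpr hjk
    simp only [hc]
    gcongr
  -- key step identity
  have hA : ∀ k ∈ Finset.Icc 1 N, t k = c k * (a k - a (k+1)) + h k / 2 := by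
    intro k hk
    have hk1 : 1 ≤ k := (Finset.mem_Icc.mp hk).1
    have hexp : a (k+1) = a k - 2 * h k * t k + h k ^ 2 := by
      have hx : x (k+1) - xstar = (x k - xstar) - h k • gtilde k := by
        rw [hupd k hk]; abel
      have e1 : ‖(x k - xstar) - h k • gtilde k‖ ^ 2
          = ‖x k - xstar‖ ^ 2 - 2 * ⟪x k - xstar, h k • gtilde k⟫ + ‖h k • gtilde k‖ ^ 2 :=
        norm_sub_sq_real _ _
      have e2 : ⟪x k - xstar, h k • gtilde k⟫ = h k * t k := by
        rw [real_inner_smul_right, real_inner_comm]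
      have e3 : ‖h k • gtilde k‖ ^ 2 = h k ^ 2 := by
        rw [norm_smul, hgt1 k hk, Real.norm_eq_abs, mul_one, sq_abs]
      simp only [ha, hx]
      rw [e1, e2, e3]; ring
    have hck : c k * (2 * h k) = 1 := by
      have hsk := hsq k hk1
      simp only [hc, hh]
      field_simp
    have hd : a k - a (k+1) = 2 * h k * t k - h k ^ 2 := by linarith
    rw [hd]
    have hre : c k * (2 * h k * t k - h k ^ 2) + h k / 2
        = (c k * (2 * h k)) * t k - (c k * (2 * h k)) * (h k / 2) + h k / 2 := by ring
    rw [hre, hck]; ring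
  -- telescoping bound
  have hB : ∀ M : ℕ, 1 ≤ M → M ≤ N →
      ∑ k ∈ Finset.Icc 1 M, t k ≤ c M * D ^ 2 - c M * a (M+1)
        + ∑ k ∈ Finset.Icc 1 M, h k / 2 := by
    intro M hM
    induction M, hM using Nat.le_induction with
    | base =>
      intro h1N
      have h1 : (1:ℕ) ∈ Finset.Icc 1 N := Finset.mem_Icc.mpr ⟨le_refl _, h1N⟩
      have haD : a 1 ≤ D ^ 2 := by
        have := hxD 1 h1
        simpa [ha] using pow_le_pow_left₀ (norm_nonneg _) this 2
      simp only [Finset.Icc_self, Finset.sum_singleton]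
      have := hA 1 h1
      nlinarith [hcnn 1]
    | succ M hM ih =>
      intro hMN
      have hM1 : M + 1 ∈ Finset.Icc 1 N := Finset.mem_Icc.mpr ⟨by omega, hMN⟩
      have hMle : M ≤ N := by omega
      have ihM := ih hMle
      rw [Finset.sum_Icc_succ_top (by omega : 1 ≤ M + 1),
        Finset.sum_Icc_succ_top (by omega : 1 ≤ M + 1)]
      have haD : a (M+1) ≤ D ^ 2 := by
        have := hxD (M+1) hM1
        simpa [ha] using pow_le_pow_left₀ (norm_nonneg _) this 2
      have hAM := hA (M+1) hM1
      have hcm : c M ≤ c (M+1) := hcmono M (M+1) (by omega)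
      nlinarith [hcnn M, hcnn (M+1)]
  -- sum of step sizes
  have hC : ∑ k ∈ Finset.Icc 1 N, h k ≤ D * Real.sqrt (2 * N) := by
    have := sum_inv_sqrt_le N
    calc ∑ k ∈ Finset.Icc 1 N, h k = ∑ k ∈ Finset.Icc 1 N, D * (Real.sqrt (2 * k))⁻¹ := by
          apply Finset.sum_congr rfl; intro k _; rw [hh, div_eq_mul_inv]
      _ = D * ∑ k ∈ Finset.Icc 1 N, (Real.sqrt (2 * k))⁻¹ := by rw [Finset.mul_sum]
      _ ≤ D * Real.sqrt (2 * N) := by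
          apply mul_le_mul_of_nonneg_left this hD.le
  -- per-step vf bound
  have hv : ∀ k ∈ Finset.Icc 1 N, vf f (x k) xstar ≤ t k + δ * D := by
    intro k hk
    have hg := hgrad k hk
    rw [vf, if_neg hg]
    have hdiffin : ⟪(‖gradient f (x k)‖)⁻¹ • gradient f (x k), x k - xstar⟫
        = t k + ⟪(‖gradient f (x k)‖)⁻¹ • gradient f (x k) - gtilde k, x k - xstar⟫ := by
      rw [inner_sub_left]; simp [ht]
    rw [hdiffin]
    have hb : ⟪(‖gradient f (x k)‖)⁻¹ • gradient f (x k) - gtilde k, x k - xstar⟫ ≤ δ * D := by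
      calc ⟪(‖gradient f (x k)‖)⁻¹ • gradient f (x k) - gtilde k, x k - xstar⟫
          ≤ ‖(‖gradient f (x k)‖)⁻¹ • gradient f (x k) - gtilde k‖ * ‖x k - xstar‖ :=
            real_inner_le_norm _ _
        _ ≤ δ * D := by
            apply mul_le_mul _ (hxD k hk) (norm_nonneg _) hδ0
            rw [norm_sub_rev]; exact hgtδ k hk
    linarith
  -- min ≤ average
  set m := (Finset.Icc 1 N).inf' (Finset.nonempty_Icc.mpr hN) (fun k => vf f (x k) xstar)
    with hm
  have hcard : (Finset.Icc 1 N).card = N := by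
    rw [Nat.card_Icc]; omega
  have hmavg : (N : ℝ) * m ≤ ∑ k ∈ Finset.Icc 1 N, vf f (x k) xstar := by
    have := Finset.card_nsmul_le_sum (Finset.Icc 1 N) (fun k => vf f (x k) xstar) m
      (fun i hi => Finset.inf'_le _ hi)
    rw [hcard] at this
    simpa [nsmul_eq_mul] using this
  have hsum1 : ∑ k ∈ Finset.Icc 1 N, vf f (x k) xstar
      ≤ (∑ k ∈ Finset.Icc 1 N, t k) + N * (δ * D) := by
    calc ∑ k ∈ Finset.Icc 1 N, vf f (x k) xstar ≤ ∑ k ∈ Finset.Icc 1 N, (t k + δ * D) :=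
          Finset.sum_le_sum hv
      _ = (∑ k ∈ Finset.Icc 1 N, t k) + N * (δ * D) := by
          rw [Finset.sum_add_distrib, Finset.sum_const, hcard, nsmul_eq_mul]
  have haN1 : 0 ≤ a (N+1) := by positivity
  have hBN := hB N hN (le_refl N)
  have hsumt : ∑ k ∈ Finset.Icc 1 N, t k ≤ D * Real.sqrt (2 * N) := by
    have hcN : c N * D ^ 2 = D * Real.sqrt (2 * N) / 2 := by
      simp only [hc]; field_simp
    have hhalf : ∑ k ∈ Finset.Icc 1 N, h k / 2 ≤ D * Real.sqrt (2 * N) / 2 := by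
      rw [← Finset.sum_div]; linarith
    nlinarith [hcnn N]
  -- conclude
  have hs := hsq N hN
  have hs2 : Real.sqrt (2 * N) ^ 2 = 2 * N := Real.sq_sqrt (by positivity)
  have hfin : (N : ℝ) * m ≤ D * Real.sqrt (2 * N) + N * (δ * D) := by linarith
  have hNpos : (0:ℝ) < N := by exact_mod_cast hN
  have h1 : m ≤ (D * Real.sqrt (2 * N) + N * (δ * D)) / N := by
    rw [le_div_iff₀ hNpos]; linarith
  have h2 : (D * Real.sqrt (2 * N) + N * (δ * D)) / N
      = D * Real.sqrt (2 * N) / N + δ * D := by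
    field_simp
  have h3 : D * Real.sqrt (2 * N) / N ≤ 3 * D / Real.sqrt (2 * N) := by
    rw [div_le_div_iff₀ hNpos hs]
    nlinarith
  linarith [h1, h2.le, h3]
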